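/- If w is a doubling weight on ℝⁿ with doubling constant C_w < 3^{np} that satisfies the C_p condition (1 < p < ∞), then w is an A_∞ weight. -/

import Mathlib

open MeasureTheory ENNReal

structure Cube (n : ℕ) where
  c : Fin n → ℝ
  r : ℝ
  hr : 0 < r

namespace Cube

def set {n : ℕ} (I : Cube n) : Set (Fin n → ℝ) :=
  {x | ∀ i, I.c i - I.r ≤ x i ∧ x i < I.c i + I.r}

noncomputable def side {n : ℕ} (I : Cube n) : ℝ := 2 * I.r

noncomputable def vol {n : ℕ} (I : Cube n) : ℝ := (2 * I.r) ^ n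

def double {n : ℕ} (I : Cube n) : Cube n := ⟨I.c, 2 * I.r, by have := I.hr; linarith⟩

def triple {n : ℕ} (I : Cube n) : Cube n := ⟨I.c, 3 * I.r, by have := I.hr; linarith⟩

end Cube

noncomputable def poisson {n : ℕ} (I : Cube n) (ω : Measure (Fin n → ℝ)) : ℝ≥0∞ :=
  ∫⁻ x, (ENNReal.ofReal (I.side / (I.side + Metric.infDist x I.set) ^ 2)) ^ n ∂ω

noncomputable def maximal {n : ℕ} (μ : Measure (Fin n → ℝ)) (x : Fin n → ℝ) : ℝ≥0∞ :=
  ⨆ (I : Cube n) (_ : x ∈ I.set), μ I.set / ENNReal.ofReal I.vol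

noncomputable def wMass {n : ℕ} (w : (Fin n → ℝ) → ℝ≥0∞) (E : Set (Fin n → ℝ)) : ℝ≥0∞ :=
  ∫⁻ x in E, w x


/-- The weighted integral `∫ (M 1_I)^p w dx` appearing in the `C_p` condition. -/
noncomputable def maximalIntegral {n : ℕ} (w : (Fin n → ℝ) → ℝ≥0∞) (p : ℝ) (I : Cube n) : ℝ≥0∞ :=
  ∫⁻ x, (maximal (volume.restrict I.set) x) ^ p * w x

/-!
A cube through `x` that meets `I` is large when `x` is far from `I`, so `M 1_I ≤ 1` everywhere
and `M 1_I ≤ 3^{-kn}` off `3^{k+1} I`. Hence `(M 1_I)^p ≤ ∑_k 3^{-knp} 1_{3^{k+2} I}` pointwise, and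
with doubling, `w(3^k I) ≤ C_w^k w(I)`, this gives `∫ (M 1_I)^p w ≤ C_w^2 ∑_k (C_w 3^{-np})^k w(I)`,
a convergent geometric series because `C_w < 3^{np}`. So the normalization in the `C_p` condition is
at most a constant times `w(I)`, and `C_p` yields the `A_∞` estimate for compact `E`; inner
regularity of `w dx` extends it to measurable `E`.
-/

namespace Cube

variable {n : ℕ} (I : Cube n)

lemma set_eq_pi : I.set = Set.univ.pi fun i => Set.Ico (I.c i - I.r) (I.c i + I.r) := by
  ext x; simp [Cube.set, Set.mem_pi, Set.mem_Ico]

lemma measurableSet_set : MeasurableSet I.set := by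
  rw [set_eq_pi]; exact MeasurableSet.univ_pi fun _ => measurableSet_Ico

lemma vol_pos : 0 < I.vol := by have := I.hr; unfold vol; positivity

lemma volume_set : volume I.set = ENNReal.ofReal I.vol := by
  have hIco : ∀ i : Fin n,
      volume (Set.Ico (I.c i - I.r) (I.c i + I.r)) = ENNReal.ofReal (2 * I.r) :=
    fun i => by rw [Real.volume_Ico]; ring_nf
  rw [set_eq_pi, volume_pi_pi, Finset.prod_congr rfl fun i _ => hIco i, Finset.prod_const,
    Finset.card_univ, Fintype.card_fin, ← ENNReal.ofReal_pow (by linarith [I.hr]), vol]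

lemma exists_le_abs_sub_of_notMem {x : Fin n → ℝ} (hx : x ∉ I.set) :
    ∃ i, I.r ≤ |x i - I.c i| := by
  simp only [Cube.set, Set.mem_ofPred_eq, not_forall] at hx
  obtain ⟨i, hi⟩ := hx
  refine ⟨i, ?_⟩
  by_cases h : I.c i - I.r ≤ x i
  · exact le_abs.2 (Or.inl (by linarith [not_lt.1 fun h' => hi ⟨h, h'⟩]))
  · exact le_abs.2 (Or.inr (by linarith))

@[simp]
lemma triple_iterate_c (k : ℕ) : (triple^[k] I).c = I.c := by
  induction k with
  | zero => rfl
  | succ k ih => rw [Function.iterate_succ_apply', ← ih]; rfl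

@[simp]
lemma triple_iterate_r (k : ℕ) : (triple^[k] I).r = 3 ^ k * I.r := by
  induction k with
  | zero => simp
  | succ k ih =>
    rw [Function.iterate_succ_apply', pow_succ, mul_comm _ (3 : ℝ), mul_assoc, ← ih]; rfl

lemma eventually_mem_triple_iterate (x : Fin n → ℝ) :
    ∀ᶠ k in Filter.atTop, x ∈ (triple^[k] I).set := by
  obtain ⟨k, hk⟩ := exists_nat_gt (dist x I.c / I.r)
  refine Filter.eventually_atTop.2 ⟨k, fun m hm i => ?_⟩
  have hm3 : (m : ℝ) ≤ 3 ^ m := by exact_mod_cast (Nat.lt_pow_self (by norm_num)).le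
  have hkm : (k : ℝ) ≤ m := by exact_mod_cast hm
  have hxi : |x i - I.c i| < 3 ^ m * I.r :=
    calc |x i - I.c i| ≤ dist x I.c := by rw [← Real.dist_eq]; exact dist_le_pi_dist x I.c i
      _ < k * I.r := (div_lt_iff₀ I.hr).1 hk
      _ ≤ 3 ^ m * I.r := by have := I.hr; gcongr; linarith
  rw [abs_lt] at hxi
  simp only [triple_iterate_c, triple_iterate_r]
  constructor <;> linarith

end Cube

section Maximal

variable {n : ℕ}

lemma maximal_restrict_le_one (s : Set (Fin n → ℝ)) (x : Fin n → ℝ) :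
    maximal (volume.restrict s) x ≤ 1 := by
  refine iSup₂_le fun J _ => ENNReal.div_le_of_le_mul ?_
  rw [one_mul, Measure.restrict_apply J.measurableSet_set, ← J.volume_set]
  exact measure_mono Set.inter_subset_left

lemma maximal_restrict_le_of_le_abs_sub (I : Cube n) {t : ℝ} (ht : 0 < t) {x : Fin n → ℝ}
    {i : Fin n} (hx : (2 * t + 1) * I.r ≤ |x i - I.c i|) :
    maximal (volume.restrict I.set) x ≤ ENNReal.ofReal (t⁻¹ ^ n) := by
  refine iSup₂_le fun J hxJ => ?_
  rw [Measure.restrict_apply J.measurableSet_set]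
  rcases (J.set ∩ I.set).eq_empty_or_nonempty with he | ⟨y, hyJ, hyI⟩
  · simp [he]
  have hJ : t * I.r ≤ J.r := by
    have hxy : |x i - y i| < 2 * J.r := by
      rw [abs_lt]; constructor <;> linarith [hxJ i, hyJ i]
    have hyc : |y i - I.c i| ≤ I.r := by
      rw [abs_le]; constructor <;> linarith [hyI i]
    linarith [abs_sub_le (x i) (y i) (I.c i)]
  refine ENNReal.div_le_of_le_mul ?_
  calc volume (J.set ∩ I.set) ≤ ENNReal.ofReal I.vol :=
        (measure_mono Set.inter_subset_right).trans I.volume_set.le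
    _ = ENNReal.ofReal (t⁻¹ ^ n * (2 * (t * I.r)) ^ n) := by
        rw [Cube.vol, ← mul_pow]; congr 2; field_simp
    _ ≤ ENNReal.ofReal (t⁻¹ ^ n) * ENNReal.ofReal J.vol := by
        rw [← ENNReal.ofReal_mul (by positivity), Cube.vol]
        have := I.hr
        gcongr

lemma inv_pow_pow_rpow_eq {a : ℝ} (ha : 0 ≤ a) (p : ℝ) (k : ℕ) :
    ((a ^ k)⁻¹ ^ n) ^ p = ((a ^ ((n : ℝ) * p))⁻¹) ^ k := by
  rw [inv_pow, ← pow_mul, ← Real.rpow_natCast, Real.inv_rpow (by positivity), ← Real.rpow_mul ha,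
    inv_pow, ← Real.rpow_natCast _ k, ← Real.rpow_mul ha]
  push_cast
  ring_nf

lemma maximal_restrict_rpow_le_of_notMem_triple_iterate (I : Cube n) {p : ℝ} (hp : 0 ≤ p)
    {k : ℕ} {x : Fin n → ℝ} (hx : x ∉ (Cube.triple^[k + 1] I).set) :
    maximal (volume.restrict I.set) x ^ p ≤
      ENNReal.ofReal ((((3 : ℝ) ^ ((n : ℝ) * p))⁻¹) ^ k) := by
  obtain ⟨i, hi⟩ := Cube.exists_le_abs_sub_of_notMem _ hx
  rw [Cube.triple_iterate_r, Cube.triple_iterate_c] at hi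
  have hk : (2 * 3 ^ k + 1) * I.r ≤ 3 ^ (k + 1) * I.r := by
    have := I.hr
    gcongr
    linarith [pow_succ (3 : ℝ) k, one_le_pow₀ (M₀ := ℝ) (a := 3) (n := k) (by norm_num)]
  have hM := maximal_restrict_le_of_le_abs_sub I (t := 3 ^ k) (by positivity) (hk.trans hi)
  calc maximal (volume.restrict I.set) x ^ p ≤ ENNReal.ofReal (((3 : ℝ) ^ k)⁻¹ ^ n) ^ p := by
        gcongr
    _ = _ := by
        rw [ENNReal.ofReal_rpow_of_nonneg (by positivity) hp, inv_pow_pow_rpow_eq (by norm_num)]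

end Maximal

section Integral

variable {n : ℕ}

lemma maximal_restrict_rpow_le_tsum (I : Cube n) {p : ℝ} (hp : 0 ≤ p) (x : Fin n → ℝ) :
    maximal (volume.restrict I.set) x ^ p ≤ ∑' k : ℕ,
      ENNReal.ofReal ((((3 : ℝ) ^ ((n : ℝ) * p))⁻¹) ^ k) *
        (Cube.triple^[k + 2] I).set.indicator 1 x := by
  set S := ∑' k : ℕ, ENNReal.ofReal ((((3 : ℝ) ^ ((n : ℝ) * p))⁻¹) ^ k) *
    (Cube.triple^[k + 2] I).set.indicator 1 x
  have hS : ∀ k, x ∈ (Cube.triple^[k + 2] I).set →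
      maximal (volume.restrict I.set) x ^ p ≤ S := by
    intro k
    induction k with
    | zero =>
      intro hx
      calc maximal (volume.restrict I.set) x ^ p ≤ 1 :=
            ENNReal.rpow_le_one (maximal_restrict_le_one _ x) hp
        _ = _ := by rw [Set.indicator_of_mem hx]; simp
        _ ≤ S := ENNReal.le_tsum 0
    | succ k ih =>
      intro hx
      by_cases hk : x ∈ (Cube.triple^[k + 2] I).set
      · exact ih hk
      calc maximal (volume.restrict I.set) x ^ p ≤ _ :=
            maximal_restrict_rpow_le_of_notMem_triple_iterate I hp hk
        _ = _ := by rw [Set.indicator_of_mem hx, Pi.one_apply, mul_one]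
        _ ≤ S := ENNReal.le_tsum (k + 1)
  obtain ⟨k, hk⟩ := Filter.eventually_atTop.1 (I.eventually_mem_triple_iterate x)
  exact hS k (hk _ (by omega))

lemma wMass_triple_iterate_le {w : (Fin n → ℝ) → ℝ≥0∞} {Cw : ℝ}
    (hdoubling : ∀ I : Cube n, wMass w I.triple.set ≤ ENNReal.ofReal Cw * wMass w I.set)
    (I : Cube n) (k : ℕ) :
    wMass w (Cube.triple^[k] I).set ≤ ENNReal.ofReal Cw ^ k * wMass w I.set := by
  induction k with
  | zero => simp
  | succ k ih =>
    rw [Function.iterate_succ_apply', pow_succ', mul_assoc]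
    exact (hdoubling _).trans (by gcongr)

lemma maximalIntegral_le {p : ℝ} (hp : 0 ≤ p) {w : (Fin n → ℝ) → ℝ≥0∞} (hw : Measurable w)
    {Cw : ℝ} (hdoubling : ∀ I : Cube n, wMass w I.triple.set ≤ ENNReal.ofReal Cw * wMass w I.set)
    (I : Cube n) :
    maximalIntegral w p I ≤ (∑' k : ℕ, ENNReal.ofReal (((3 : ℝ) ^ ((n : ℝ) * p))⁻¹ * Cw) ^ k) *
      ENNReal.ofReal Cw ^ 2 * wMass w I.set := by
  set b : ℝ := ((3 : ℝ) ^ ((n : ℝ) * p))⁻¹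
  have hb : 0 ≤ b := by positivity
  set S : ℕ → Set (Fin n → ℝ) := fun k => (Cube.triple^[k + 2] I).set
  have hS : ∀ k, MeasurableSet (S k) := fun k => Cube.measurableSet_set _
  calc maximalIntegral w p I
      ≤ ∫⁻ x, ∑' k, ENNReal.ofReal (b ^ k) * (S k).indicator w x := by
        refine lintegral_mono fun x => ?_
        calc maximal (volume.restrict I.set) x ^ p * w x
            ≤ (∑' k, ENNReal.ofReal (b ^ k) * (S k).indicator 1 x) * w x := by
              gcongr; exact maximal_restrict_rpow_le_tsum I hp x
          _ = _ := by
              rw [← ENNReal.tsum_mul_right]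
              congr 1; ext k
              by_cases hx : x ∈ S k <;> simp [hx]
    _ = ∑' k, ENNReal.ofReal (b ^ k) * wMass w (S k) := by
        rw [lintegral_tsum fun k => ((hw.indicator (hS k)).const_mul _).aemeasurable]
        congr 1; ext k
        rw [lintegral_const_mul _ (hw.indicator (hS k)), lintegral_indicator (hS k), wMass]
    _ ≤ ∑' k, ENNReal.ofReal (b ^ k) * (ENNReal.ofReal Cw ^ (k + 2) * wMass w I.set) :=
        ENNReal.tsum_le_tsum fun k => by gcongr; exact wMass_triple_iterate_le hdoubling I (k + 2)
    _ = _ := by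
        rw [← ENNReal.tsum_mul_right, ← ENNReal.tsum_mul_right]
        congr 1; ext k
        rw [ENNReal.ofReal_mul hb, ENNReal.ofReal_pow hb]
        ring

end Integral

section AInfty

variable {n : ℕ} {w : (Fin n → ℝ) → ℝ≥0∞}

def SatisfiesCp (w : (Fin n → ℝ) → ℝ≥0∞) (p : ℝ) : Prop :=
  ∃ C > (0 : ℝ), ∃ ε > (0 : ℝ), ∀ I : Cube n, maximalIntegral w p I < ⊤ →
    ∀ E : Set (Fin n → ℝ), E ⊆ I.set → IsCompact E →
      wMass w E ≤ ENNReal.ofReal (C * ((volume E).toReal / I.vol) ^ ε) * maximalIntegral w p I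

def IsAInfty (w : (Fin n → ℝ) → ℝ≥0∞) : Prop :=
  ∃ C > (0 : ℝ), ∃ ε > (0 : ℝ), ∀ I : Cube n, ∀ E : Set (Fin n → ℝ), E ⊆ I.set →
    MeasurableSet E →
      wMass w E ≤ ENNReal.ofReal (C * ((volume E).toReal / I.vol) ^ ε) * wMass w I.set

lemma sigmaFinite_volume_withDensity (hloc : ∀ I : Cube n, wMass w I.set < ⊤) :
    SigmaFinite (volume.withDensity w) := by
  let I : Cube n := ⟨0, 1, one_pos⟩
  refine ⟨⟨⟨fun k => (Cube.triple^[k] I).set, fun _ => trivial, fun k => ?_, ?_⟩⟩⟩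
  · rw [withDensity_apply _ (Cube.measurableSet_set _)]
    exact hloc _
  · exact Set.eq_univ_of_forall fun x =>
      Set.mem_iUnion.2 (I.eventually_mem_triple_iterate x).exists

lemma wMass_le_of_forall_isCompact (hloc : ∀ I : Cube n, wMass w I.set < ⊤)
    {E : Set (Fin n → ℝ)} (hE : MeasurableSet E) (hEfin : wMass w E ≠ ⊤) {c : ℝ≥0∞}
    (h : ∀ K ⊆ E, IsCompact K → wMass w K ≤ c) : wMass w E ≤ c := by
  have := sigmaFinite_volume_withDensity hloc
  rw [wMass, ← withDensity_apply _ hE] at hEfin ⊢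
  rw [hE.measure_eq_iSup_isCompact_of_ne_top hEfin]
  refine iSup_le fun K => iSup_le fun hKE => iSup_le fun hK => ?_
  rw [withDensity_apply _ hK.isClosed.measurableSet]
  exact h K hKE hK

lemma IsAInfty.of_satisfiesCp {p : ℝ} (hloc : ∀ I : Cube n, wMass w I.set < ⊤)
    (hCp : SatisfiesCp w p) {K : ℝ≥0∞} (hK : K ≠ ⊤)
    (hmax : ∀ I : Cube n, maximalIntegral w p I ≤ K * wMass w I.set) : IsAInfty w := by
  obtain ⟨C, hC, ε, hε, hCp⟩ := hCp
  refine ⟨C * (K.toReal + 1), by positivity, ε, hε, fun I E hEI hE => ?_⟩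
  have hvolE : volume E ≠ ⊤ :=
    ((measure_mono hEI).trans_lt (I.volume_set ▸ ENNReal.ofReal_lt_top)).ne
  have hK' : K ≤ ENNReal.ofReal (K.toReal + 1) :=
    (ENNReal.ofReal_toReal hK).symm.le.trans (ENNReal.ofReal_le_ofReal (by linarith))
  refine wMass_le_of_forall_isCompact hloc hE
    (ne_top_of_le_ne_top (hloc I).ne (lintegral_mono_set hEI)) fun L hLE hL => ?_
  have := I.vol_pos
  calc wMass w L
      ≤ ENNReal.ofReal (C * ((volume L).toReal / I.vol) ^ ε) * maximalIntegral w p I :=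
        hCp I ((hmax I).trans_lt (ENNReal.mul_lt_top hK.lt_top (hloc I))) L (hLE.trans hEI) hL
    _ ≤ ENNReal.ofReal (C * ((volume E).toReal / I.vol) ^ ε) *
          (ENNReal.ofReal (K.toReal + 1) * wMass w I.set) := by
        gcongr
        exact (hmax I).trans (by gcongr)
    _ = ENNReal.ofReal (C * (K.toReal + 1) * ((volume E).toReal / I.vol) ^ ε) * wMass w I.set := by
        rw [← mul_assoc, ← ENNReal.ofReal_mul (by positivity)]
        ring_nf

end AInfty

theorem stmt_0_general (n : ℕ) (p : ℝ) (hp : 1 < p)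
    (w : (Fin n → ℝ) → ℝ≥0∞) (hw : Measurable w)
    (hloc : ∀ I : Cube n, wMass w I.set < ⊤)
    (Cw : ℝ) (hCwsmall : Cw < (3 : ℝ) ^ ((n : ℝ) * p))
    (hdoubling : ∀ I : Cube n, wMass w I.triple.set ≤ ENNReal.ofReal Cw * wMass w I.set)
    (hCp : ∃ C > (0:ℝ), ∃ ε > (0:ℝ), ∀ I : Cube n,
      maximalIntegral w p I < ⊤ →
      ∀ E : Set (Fin n → ℝ), E ⊆ I.set → IsCompact E →
        wMass w E ≤ ENNReal.ofReal (C * ((volume E).toReal / I.vol) ^ ε) *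
          maximalIntegral w p I) :
    ∃ C > (0:ℝ), ∃ ε > (0:ℝ), ∀ I : Cube n, ∀ E : Set (Fin n → ℝ),
      E ⊆ I.set → MeasurableSet E →
      wMass w E ≤ ENNReal.ofReal (C * ((volume E).toReal / I.vol) ^ ε) * wMass w I.set := by
  have hratio : ((3 : ℝ) ^ ((n : ℝ) * p))⁻¹ * Cw < 1 :=
    (inv_mul_lt_one₀ (by positivity)).2 hCwsmall
  have hgeom : ∑' k : ℕ, ENNReal.ofReal (((3 : ℝ) ^ ((n : ℝ) * p))⁻¹ * Cw) ^ k ≠ ⊤ :=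
    (tsum_geometric_lt_top.2 (ENNReal.ofReal_lt_one.2 hratio)).ne
  exact IsAInfty.of_satisfiesCp hloc hCp (ENNReal.mul_ne_top hgeom (by finiteness))
    (maximalIntegral_le (by linarith) hw hdoubling)

/-- If `w` is a doubling weight on `ℝⁿ` with doubling constant `C_w < 3^{np}`
that satisfies the `C_p` condition (`1 < p < ∞`), then `w` is an `A_∞` weight. -/
theorem stmt_0 (n : ℕ) (hn : 0 < n) (p : ℝ) (hp : 1 < p)
    (w : (Fin n → ℝ) → ℝ≥0∞) (hw : Measurable w)
    (hloc : ∀ I : Cube n, wMass w I.set < ⊤)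
    (Cw : ℝ) (hCw : 0 < Cw) (hCwsmall : Cw < (3 : ℝ) ^ ((n : ℝ) * p))
    (hdoubling : ∀ I : Cube n, wMass w I.triple.set ≤ ENNReal.ofReal Cw * wMass w I.set)
    (hCp : ∃ C > (0:ℝ), ∃ ε > (0:ℝ), ∀ I : Cube n,
      maximalIntegral w p I < ⊤ →
      ∀ E : Set (Fin n → ℝ), E ⊆ I.set → IsCompact E →
        wMass w E ≤ ENNReal.ofReal (C * ((volume E).toReal / I.vol) ^ ε) *
          maximalIntegral w p I) :
    ∃ C > (0:ℝ), ∃ ε > (0:ℝ), ∀ I : Cube n, ∀ E : Set (Fin n → ℝ),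
      E ⊆ I.set → MeasurableSet E →
      wMass w E ≤ ENNReal.ofReal (C * ((volume E).toReal / I.vol) ^ ε) * wMass w I.set :=
  stmt_0_general n p hp w hw hloc Cw hCwsmall hdoubling hCp
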